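/- Let α, ω₁, ω₂ be the three (pairwise distinct) complex roots of x³ - x² - x - 1 = 0, and set λ = (α - ω₁)(α - ω₂)(ω₁ - ω₂). Then for every natural number n, H_n = (1/λ)·[ 3(ω₁ - ω₂)α^{n+2} - 3(α - ω₂)ω₁^{n+2} + 3(α - ω₁)ω₂^{n+2} - 3(ω₁ - ω₂)α^{n+1} + 3(α - ω₂)ω₁^{n+1} - 3(α - ω₁)ω₂^{n+1} - (ω₁ - ω₂)αⁿ + (α - ω₂)ω₁ⁿ - (α - ω₁)ω₂ⁿ ]. -/
import Mathlib


/-- The generalized Tribonacci sequence. -/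
def genTrib : ℕ → ℤ
  | 0 => 3
  | 1 => 0
  | 2 => 2
  | n + 3 => genTrib (n + 2) + genTrib (n + 1) + genTrib n

theorem genTrib_binet_diagonalization (α ω₁ ω₂ : ℂ)
    (hne₁ : α ≠ ω₁) (hne₂ : α ≠ ω₂) (hne₃ : ω₁ ≠ ω₂)
    (hroots : ∀ x : ℂ, x ^ 3 - x ^ 2 - x - 1 = (x - α) * (x - ω₁) * (x - ω₂)) (n : ℕ) :
    (genTrib n : ℂ) =
      (1 / ((α - ω₁) * (α - ω₂) * (ω₁ - ω₂))) *
        (3 * (ω₁ - ω₂) * α ^ (n + 2) - 3 * (α - ω₂) * ω₁ ^ (n + 2) +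
          3 * (α - ω₁) * ω₂ ^ (n + 2) -
          3 * (ω₁ - ω₂) * α ^ (n + 1) + 3 * (α - ω₂) * ω₁ ^ (n + 1) -
          3 * (α - ω₁) * ω₂ ^ (n + 1) -
          (ω₁ - ω₂) * α ^ n + (α - ω₂) * ω₁ ^ n - (α - ω₁) * ω₂ ^ n) := by
  have d₁ : α - ω₁ ≠ 0 := sub_ne_zero.mpr hne₁
  have d₂ : α - ω₂ ≠ 0 := sub_ne_zero.mpr hne₂
  have d₃ : ω₁ - ω₂ ≠ 0 := sub_ne_zero.mpr hne₃
  have hLne : (α - ω₁) * (α - ω₂) * (ω₁ - ω₂) ≠ 0 := by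
    exact mul_ne_zero (mul_ne_zero d₁ d₂) d₃
  have hα : α ^ 3 - α ^ 2 - α - 1 = 0 := by rw [hroots]; ring
  have hω₁ : ω₁ ^ 3 - ω₁ ^ 2 - ω₁ - 1 = 0 := by rw [hroots]; ring
  have hω₂ : ω₂ ^ 3 - ω₂ ^ 2 - ω₂ - 1 = 0 := by rw [hroots]; ring
  -- Vieta
  have v0 := hroots 0
  have v1 := hroots 1
  have v2 := hroots (-1)
  have he3 : α * ω₁ * ω₂ = 1 := by linear_combination v0
  have he1 : α + ω₁ + ω₂ = 1 := by
    linear_combination (1/2 : ℂ) * v1 + (1/2 : ℂ) * v2 - he3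
  have he2 : α * ω₁ + α * ω₂ + ω₁ * ω₂ = -1 := by
    linear_combination -(1/2 : ℂ) * v1 + (1/2 : ℂ) * v2
  have key : ∀ n : ℕ, (genTrib n : ℂ) * ((α - ω₁) * (α - ω₂) * (ω₁ - ω₂)) =
      (3 * (ω₁ - ω₂) * α ^ (n + 2) - 3 * (α - ω₂) * ω₁ ^ (n + 2) +
        3 * (α - ω₁) * ω₂ ^ (n + 2) -
        3 * (ω₁ - ω₂) * α ^ (n + 1) + 3 * (α - ω₂) * ω₁ ^ (n + 1) -
        3 * (α - ω₁) * ω₂ ^ (n + 1) -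
        (ω₁ - ω₂) * α ^ n + (α - ω₂) * ω₁ ^ n - (α - ω₁) * ω₂ ^ n) := by
    intro n
    induction n using Nat.strong_induction_on with
    | _ n ih =>
      match n with
      | 0 =>
        norm_num [genTrib]
        ring
      | 1 =>
        norm_num [genTrib]
        linear_combination -3 * ((α - ω₁) * (α - ω₂) * (ω₁ - ω₂)) * he1
      | 2 =>
        norm_num [genTrib]
        linear_combination (-3 * ((α - ω₁) * (α - ω₂) * (ω₁ - ω₂)) * (α + ω₁ + ω₂)) * he1
          + 3 * ((α - ω₁) * (α - ω₂) * (ω₁ - ω₂)) * he2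
      | (m + 3) =>
        have i0 := ih m (by omega)
        have i1 := ih (m + 1) (by omega)
        have i2 := ih (m + 2) (by omega)
        have hrec : (genTrib (m + 3) : ℂ) =
            (genTrib (m + 2) : ℂ) + genTrib (m + 1) + genTrib m := by
          rw [genTrib]; push_cast; ring
        rw [hrec]
        linear_combination i0 + i1 + i2
          - ((ω₁ - ω₂) * (3 * α ^ (m + 2) - 3 * α ^ (m + 1) - α ^ m)) * hα
          + ((α - ω₂) * (3 * ω₁ ^ (m + 2) - 3 * ω₁ ^ (m + 1) - ω₁ ^ m)) * hω₁
          - ((α - ω₁) * (3 * ω₂ ^ (m + 2) - 3 * ω₂ ^ (m + 1) - ω₂ ^ m)) * hω₂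
  rw [one_div, eq_comm, inv_mul_eq_iff_eq_mul₀ hLne, eq_comm, mul_comm]
  exact key n
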